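/- arXiv:1701.04140 — 2 statements merged into one kernel-verified Lean document; each statement's English description precedes it below -/
import Mathlib

section
/- Let Φ be a root system with Weyl group W, J ⊆ Δ, and let 𝒱 ⊆ Φ⁺ be any subset of positive roots. For w ∈ W written as w = vy with v the minimal-length coset representative of wW_J and y ∈ W_J, the following identity holds: |N(w⁻¹) ∩ 𝒱ᶜ| + |N(w⁻¹) ∩ 𝒱 ∩ w(Φ_J⁻)| = |N(v⁻¹) ∩ 𝒱ᶜ| + ℓ(y), where 𝒱ᶜ = Φ⁺ − 𝒱 and ℓ is the length function. -/
/-- Simple reflection `s_i` in `S_{n+1}` (type `A_n`), swapping positions `i` and `i+1`. -/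
def sgen {n : ℕ} (i : Fin n) : Equiv.Perm (Fin (n + 1)) :=
  Equiv.swap i.castSucc i.succ

/-- Action of a permutation on a root `ε_{p.1} - ε_{p.2}` of type `A`. -/
def actRoot {n : ℕ} (w : Equiv.Perm (Fin n)) (p : Fin n × Fin n) : Fin n × Fin n :=
  (w p.1, w p.2)

/-- The root `ε_{p.1} - ε_{p.2}` is positive. -/
def IsPosRoot {n : ℕ} (p : Fin n × Fin n) : Prop := p.1 < p.2

/-- The root `ε_{p.1} - ε_{p.2}` is negative. -/
def IsNegRoot {n : ℕ} (p : Fin n × Fin n) : Prop := p.2 < p.1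

/-- Inversion set `N(w) = {γ ∈ Φ⁺ : w(γ) ∈ Φ⁻}`. -/
def invSet {n : ℕ} (w : Equiv.Perm (Fin n)) : Set (Fin n × Fin n) :=
  {p | IsPosRoot p ∧ IsNegRoot (actRoot w p)}

/-- Bruhat length = number of inversions. -/
def len {n : ℕ} (w : Equiv.Perm (Fin n)) : ℕ :=
  (Finset.univ.filter fun p : Fin n × Fin n => p.1 < p.2 ∧ w p.2 < w p.1).card

/-- The parabolic subgroup `W_J` generated by the simple reflections indexed by `J`. -/
def WJ {n : ℕ} (J : Set (Fin n)) : Subgroup (Equiv.Perm (Fin (n + 1))) :=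
  Subgroup.closure (sgen '' J)

/-- Membership in the sub-root-system `Φ_J` spanned by the simple roots indexed by `J`:
all simple roots in the support of the root lie in `J`. -/
def InPhiJ {n : ℕ} (J : Set (Fin n)) (p : Fin (n + 1) × Fin (n + 1)) : Prop :=
  p.1 ≠ p.2 ∧ ∀ k : Fin n, min p.1 p.2 ≤ k.castSucc → k.succ ≤ max p.1 p.2 → k ∈ J

/-- `v` is the minimal-length representative of its coset `vW_J`. -/
def IsMinRep {n : ℕ} (J : Set (Fin n)) (v : Equiv.Perm (Fin (n + 1))) : Prop :=
  ∀ y ∈ WJ J, len v ≤ len (v * y)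

open scoped Classical

/-- Inversion set as a `Finset`. -/
noncomputable def finInv {n : ℕ} (w : Equiv.Perm (Fin n)) : Finset (Fin n × Fin n) :=
  Finset.univ.filter fun p => p ∈ invSet w

/-- The negative roots of `Φ_J` as a `Finset`. -/
noncomputable def phiJNeg {n : ℕ} (J : Set (Fin n)) :
    Finset (Fin (n + 1) × Fin (n + 1)) :=
  Finset.univ.filter fun p => IsNegRoot p ∧ InPhiJ J p

/-!
Write `w = v y`. The simple roots `α_k` with `k ∉ J` cut the positions `0, …, n` into consecutive
blocks; `y ∈ W_J` permutes each block and keeps the relative order of points in different blocks,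
while the minimal representative `v` is increasing on every block. Hence a positive root is
inverted by `w⁻¹` exactly when either `w⁻¹` sends its two ends to different blocks, and then it is
also inverted by `v⁻¹`, or to the same block, and then it lies in `w(Φ_J⁻)`. Conversely `v⁻¹`
inverts no root whose ends lie in one block after applying `v⁻¹`. So `N(w⁻¹)` is the disjoint
union of `N(v⁻¹)` and `N(w⁻¹) ∩ w(Φ_J⁻)`, and the latter is carried bijectively onto `N(y)` by
`w⁻¹`; the identity follows by counting these pieces inside and outside `𝒱`.
-/

theorem Finset.card_sdiff_add_card_inter_inter_of_subset_union {α : Type*} [DecidableEq α]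
    {A A' C V : Finset α} (hA'A : A' ⊆ A) (hA : A ⊆ A' ∪ C) (hA'C : Disjoint A' C) :
    (A \ V).card + (A ∩ V ∩ C).card = (A' \ V).card + (A ∩ C).card := by
  have hsplit : A \ V = (A' \ V) ∪ ((A ∩ C) \ V) := by
    ext x
    grind
  have hdisj : Disjoint (A' \ V) ((A ∩ C) \ V) :=
    (hA'C.mono_right inter_subset_right).mono sdiff_subset sdiff_subset
  rw [hsplit, card_union_of_disjoint hdisj, add_assoc, inter_right_comm,
    card_sdiff_add_card_inter]

section SameBlock

variable {n : ℕ} {J : Set (Fin n)}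

def SameBlock (J : Set (Fin n)) (i j : Fin (n + 1)) : Prop :=
  ∀ k : Fin n, min i j ≤ k.castSucc → k.succ ≤ max i j → k ∈ J

theorem sameBlock_iff {i j : Fin (n + 1)} :
    SameBlock J i j ↔
      ∀ k : Fin n, min (i : ℕ) j ≤ k → (k : ℕ) + 1 ≤ max (i : ℕ) j → k ∈ J := by
  simp only [SameBlock, Fin.le_def, Fin.coe_min, Fin.coe_max, Fin.val_castSucc, Fin.val_succ]

theorem SameBlock.refl (J : Set (Fin n)) (i : Fin (n + 1)) : SameBlock J i i :=
  sameBlock_iff.2 fun _ _ _ ↦ by omega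

theorem SameBlock.symm {i j : Fin (n + 1)} (h : SameBlock J i j) : SameBlock J j i :=
  sameBlock_iff.2 fun k h₁ h₂ ↦ sameBlock_iff.1 h k (by omega) (by omega)

theorem SameBlock.trans {i j l : Fin (n + 1)} (h₁ : SameBlock J i j) (h₂ : SameBlock J j l) :
    SameBlock J i l := by
  rw [sameBlock_iff] at *
  intro k hk₁ hk₂
  by_cases hk : min (i : ℕ) j ≤ k ∧ (k : ℕ) + 1 ≤ max (i : ℕ) j
  · exact h₁ k hk.1 hk.2
  · exact h₂ k (by omega) (by omega)

theorem sameBlock_castSucc_succ {k : Fin n} (hk : k ∈ J) : SameBlock J k.castSucc k.succ := by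
  rw [sameBlock_iff]
  intro k' h₁ h₂
  simp only [Fin.val_castSucc, Fin.val_succ] at h₁ h₂
  rwa [show k' = k by ext; omega]

/-- A simple root `α_k` with `k ∉ J` between `i < j` is a wall that nothing in the block of `i`
can cross to reach the block of `j`. -/
theorem lt_of_lt_of_not_sameBlock {i j i' j' : Fin (n + 1)} (hij : i < j)
    (hns : ¬SameBlock J i j) (hi : SameBlock J i i') (hj : SameBlock J j j') : i' < j' := by
  rw [sameBlock_iff] at hns hi hj
  push Not at hns
  obtain ⟨k, hk₁, hk₂, hkJ⟩ := hns
  rw [Fin.lt_def] at hij ⊢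
  have hi' : (i' : ℕ) ≤ k := by
    by_contra h
    exact hkJ (hi k (by omega) (by omega))
  have hj' : (k : ℕ) + 1 ≤ j' := by
    by_contra h
    exact hkJ (hj k (by omega) (by omega))
  omega

theorem sameBlock_apply_of_mem_WJ {y : Equiv.Perm (Fin (n + 1))} (hy : y ∈ WJ J)
    (i : Fin (n + 1)) : SameBlock J i (y i) := by
  induction hy using Subgroup.closure_induction generalizing i with
  | mem x hx =>
    obtain ⟨k, hk, rfl⟩ := hx
    have hblock := sameBlock_castSucc_succ hk
    by_cases h₁ : i = k.castSucc
    · subst h₁; simpa [sgen] using hblock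
    by_cases h₂ : i = k.succ
    · subst h₂; simpa [sgen] using hblock.symm
    simpa [sgen, Equiv.swap_apply_of_ne_of_ne h₁ h₂] using SameBlock.refl J i
  | one => exact SameBlock.refl J i
  | mul x z _ _ hx hz => exact (hz i).trans (hx (z i))
  | inv x _ hx => simpa using (hx (x⁻¹ i)).symm

theorem sameBlock_apply_apply_iff {y : Equiv.Perm (Fin (n + 1))} (hy : y ∈ WJ J)
    {i j : Fin (n + 1)} : SameBlock J (y i) (y j) ↔ SameBlock J i j :=
  have hi := sameBlock_apply_of_mem_WJ hy i
  have hj := sameBlock_apply_of_mem_WJ hy j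
  ⟨fun h ↦ (hi.trans h).trans hj.symm, fun h ↦ (hi.symm.trans h).trans hj⟩

theorem apply_lt_apply_of_not_sameBlock {y : Equiv.Perm (Fin (n + 1))} (hy : y ∈ WJ J)
    {i j : Fin (n + 1)} (hij : i < j) (hns : ¬SameBlock J i j) : y i < y j :=
  lt_of_lt_of_not_sameBlock hij hns (sameBlock_apply_of_mem_WJ hy i)
    (sameBlock_apply_of_mem_WJ hy j)

end SameBlock

section MinimalRepresentative

variable {n : ℕ}

theorem swap_castSucc_succ_lt_swap {k : Fin n} {x z : Fin (n + 1)} (hxz : x < z)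
    (hne : ¬(x = k.castSucc ∧ z = k.succ)) :
    Equiv.swap k.castSucc k.succ x < Equiv.swap k.castSucc k.succ z := by
  simp only [Fin.ext_iff, Fin.lt_def, Fin.val_castSucc, Fin.val_succ] at hxz hne ⊢
  rw [Equiv.swap_apply_def, Equiv.swap_apply_def]
  split_ifs <;> simp only [Fin.ext_iff, Fin.val_castSucc, Fin.val_succ] at * <;> omega

/-- Right multiplication by `s_k` permutes the inversions of `v` other than `(k, k+1)`. -/
theorem len_mul_sgen_lt {v : Equiv.Perm (Fin (n + 1))} {k : Fin n}
    (h : v k.succ < v k.castSucc) : len (v * sgen k) < len v := by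
  set s := Equiv.swap k.castSucc k.succ
  set inversions := fun u : Equiv.Perm (Fin (n + 1)) ↦
    Finset.univ.filter fun p : Fin (n + 1) × Fin (n + 1) ↦ p.1 < p.2 ∧ u p.2 < u p.1
  have hsubset : (inversions (v * sgen k)).image (Prod.map s s) ⊆ inversions v := by
    intro q hq
    obtain ⟨p, hp, rfl⟩ := Finset.mem_image.1 hq
    simp only [inversions, Finset.mem_filter, Finset.mem_univ, true_and] at hp ⊢
    refine ⟨swap_castSucc_succ_lt_swap hp.1 ?_, hp.2⟩
    rintro ⟨h₁, h₂⟩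
    have := hp.2
    simp only [h₁, h₂, Equiv.Perm.mul_apply, sgen, Equiv.swap_apply_left,
      Equiv.swap_apply_right] at this
    exact lt_asymm h this
  have hkk : (k.castSucc, k.succ) ∈
      inversions v \ (inversions (v * sgen k)).image (Prod.map s s) := by
    simp only [inversions, Finset.mem_sdiff, Finset.mem_filter, Finset.mem_univ, true_and,
      Finset.mem_image]
    refine ⟨⟨Fin.castSucc_lt_succ, h⟩, ?_⟩
    rintro ⟨⟨p₁, p₂⟩, hp, hps⟩
    simp only [Prod.map, Prod.mk.injEq, s, Equiv.swap_apply_eq_iff, Equiv.swap_apply_left,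
      Equiv.swap_apply_right] at hps
    rw [hps.1, hps.2] at hp
    exact lt_asymm hp.1 Fin.castSucc_lt_succ
  calc len (v * sgen k) = ((inversions (v * sgen k)).image (Prod.map s s)).card :=
        (Finset.card_image_of_injective _ (s.injective.prodMap s.injective)).symm
    _ < (inversions v).card := Finset.card_lt_card (Finset.ssubset_iff_subset_ne.2
        ⟨hsubset, fun heq ↦ by simp [heq] at hkk⟩)

theorem IsMinRep.apply_castSucc_lt_apply_succ {J : Set (Fin n)} {v : Equiv.Perm (Fin (n + 1))}
    (hv : IsMinRep J v) {k : Fin n} (hk : k ∈ J) : v k.castSucc < v k.succ := by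
  refine lt_of_le_of_ne (not_lt.1 fun h ↦ ?_) (v.injective.ne Fin.castSucc_lt_succ.ne)
  exact (len_mul_sgen_lt h).not_ge (hv _ (Subgroup.subset_closure ⟨k, hk, rfl⟩))

theorem IsMinRep.apply_lt_apply {J : Set (Fin n)} {v : Equiv.Perm (Fin (n + 1))}
    (hv : IsMinRep J v) {i j : Fin (n + 1)} (hij : i < j) (hsb : SameBlock J i j) :
    v i < v j := by
  induction j using Fin.induction with
  | zero => exact absurd hij (Fin.not_lt_zero i)
  | succ k ih =>
    rw [sameBlock_iff] at hsb
    rw [Fin.lt_def, Fin.val_succ] at hij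
    have hstep := hv.apply_castSucc_lt_apply_succ
      (hsb k (by rw [Fin.val_succ]; omega) (by rw [Fin.val_succ]; omega))
    rcases Nat.lt_succ_iff_lt_or_eq.1 hij with hlt | heq
    · refine (ih hlt (sameBlock_iff.2 fun k' h₁ h₂ ↦ hsb k' ?_ ?_)).trans hstep <;>
        simp only [Fin.val_castSucc, Fin.val_succ] at * <;> omega
    · rwa [show i = k.castSucc from Fin.ext heq]

theorem IsMinRep.apply_lt_apply_iff {J : Set (Fin n)} {v : Equiv.Perm (Fin (n + 1))}
    (hv : IsMinRep J v) {i j : Fin (n + 1)} (hsb : SameBlock J i j) : v i < v j ↔ i < j := by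
  refine ⟨fun h ↦ lt_of_not_ge fun hji ↦ ?_, fun h ↦ hv.apply_lt_apply h hsb⟩
  rcases hji.lt_or_eq with hlt | rfl
  · exact lt_asymm h (hv.apply_lt_apply hlt hsb.symm)
  · exact lt_irrefl _ h

end MinimalRepresentative

section InversionSets

variable {n : ℕ} {J : Set (Fin n)} {v y : Equiv.Perm (Fin (n + 1))}

theorem mem_finInv {m : ℕ} {u : Equiv.Perm (Fin m)} {p : Fin m × Fin m} :
    p ∈ finInv u ↔ p.1 < p.2 ∧ u p.2 < u p.1 := by
  simp only [finInv, Finset.mem_filter, Finset.mem_univ, true_and]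
  rfl

theorem card_finInv {m : ℕ} (u : Equiv.Perm (Fin m)) : (finInv u).card = len u := by
  simp only [len, ← mem_finInv (u := u), Finset.filter_mem_eq_inter, Finset.univ_inter]

theorem mem_image_phiJNeg {w : Equiv.Perm (Fin (n + 1))} {p : Fin (n + 1) × Fin (n + 1)} :
    p ∈ (phiJNeg J).image (actRoot w) ↔
      w⁻¹ p.2 < w⁻¹ p.1 ∧ SameBlock J (w⁻¹ p.1) (w⁻¹ p.2) := by
  simp only [Finset.mem_image, phiJNeg, Finset.mem_filter, Finset.mem_univ, true_and]
  constructor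
  · rintro ⟨q, ⟨hneg, -, hsb⟩, rfl⟩
    simpa [actRoot] using ⟨hneg, hsb⟩
  · rintro ⟨hneg, hsb⟩
    exact ⟨actRoot w⁻¹ p, ⟨hneg, hneg.ne', hsb⟩, by simp [actRoot]⟩

theorem sameBlock_of_lt_of_apply_lt (hy : y ∈ WJ J) {i j : Fin (n + 1)} (hij : i < j)
    (h : y j < y i) : SameBlock J i j :=
  by_contra fun hns ↦ lt_asymm h (apply_lt_apply_of_not_sameBlock hy hij hns)

theorem IsMinRep.mul_apply_lt_mul_apply_iff (hv : IsMinRep J v) (hy : y ∈ WJ J)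
    {i j : Fin (n + 1)} (hsb : SameBlock J i j) : (v * y) i < (v * y) j ↔ y i < y j :=
  hv.apply_lt_apply_iff ((sameBlock_apply_apply_iff hy).2 hsb)

theorem IsMinRep.not_sameBlock_of_mem_finInv_inv (hv : IsMinRep J v)
    {p : Fin (n + 1) × Fin (n + 1)} (hp : p ∈ finInv v⁻¹) :
    ¬SameBlock J (v⁻¹ p.1) (v⁻¹ p.2) := fun hsb ↦ by
  rw [mem_finInv] at hp
  have := (hv.apply_lt_apply_iff hsb.symm).2 hp.2
  simp only [Equiv.Perm.coe_inv, Equiv.apply_symm_apply] at this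
  exact lt_asymm hp.1 this

theorem finInv_inv_subset_finInv_mul_inv (hv : IsMinRep J v) (hy : y ∈ WJ J) :
    finInv v⁻¹ ⊆ finInv (v * y)⁻¹ := by
  intro p hp
  have hns := hv.not_sameBlock_of_mem_finInv_inv hp
  rw [mem_finInv] at hp ⊢
  exact ⟨hp.1, apply_lt_apply_of_not_sameBlock (inv_mem hy) hp.2 fun h ↦ hns h.symm⟩

theorem finInv_mul_inv_subset (hy : y ∈ WJ J) :
    finInv (v * y)⁻¹ ⊆ finInv v⁻¹ ∪ (phiJNeg J).image (actRoot (v * y)) := by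
  intro p hp
  rw [mem_finInv] at hp
  rw [Finset.mem_union, mem_image_phiJNeg, mem_finInv]
  by_cases hsb : SameBlock J ((v * y)⁻¹ p.1) ((v * y)⁻¹ p.2)
  · exact Or.inr ⟨hp.2, hsb⟩
  · have := apply_lt_apply_of_not_sameBlock hy hp.2 fun h ↦ hsb h.symm
    simp only [mul_inv_rev, Equiv.Perm.mul_apply, Equiv.Perm.coe_inv,
      Equiv.apply_symm_apply] at this
    exact Or.inl ⟨hp.1, this⟩

theorem disjoint_finInv_inv_image_phiJNeg (hv : IsMinRep J v) (hy : y ∈ WJ J) :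
    Disjoint (finInv v⁻¹) ((phiJNeg J).image (actRoot (v * y))) := by
  refine Finset.disjoint_left.2 fun p hp hpC ↦ hv.not_sameBlock_of_mem_finInv_inv hp ?_
  have hsb := (sameBlock_apply_apply_iff hy).2 (mem_image_phiJNeg.1 hpC).2
  simpa only [mul_inv_rev, Equiv.Perm.mul_apply, Equiv.Perm.coe_inv,
    Equiv.apply_symm_apply] using hsb

/-- `w⁻¹` followed by `ε_i - ε_j ↦ ε_j - ε_i` carries `N(w⁻¹) ∩ w(Φ_J⁻)` onto `N(y)`. -/
theorem card_finInv_mul_inv_inter_image_phiJNeg (hv : IsMinRep J v) (hy : y ∈ WJ J) :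
    (finInv (v * y)⁻¹ ∩ (phiJNeg J).image (actRoot (v * y))).card = len y := by
  rw [← card_finInv]
  refine Finset.card_nbij' (fun p ↦ (actRoot (v * y)⁻¹ p).swap)
    (fun q ↦ actRoot (v * y) q.swap) ?_ ?_
    (fun p _ ↦ by simp [actRoot]) (fun q _ ↦ by simp [actRoot])
  · intro p hp
    simp only [Finset.coe_inter, Set.mem_inter_iff, Finset.mem_coe, mem_finInv,
      mem_image_phiJNeg] at hp ⊢
    obtain ⟨⟨hpos, -⟩, hneg, hsb⟩ := hp
    simp only [actRoot, Prod.fst_swap, Prod.snd_swap]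
    refine ⟨hneg, (hv.mul_apply_lt_mul_apply_iff hy hsb).1 ?_⟩
    simpa using hpos
  · intro q hq
    simp only [Finset.coe_inter, Set.mem_inter_iff, Finset.mem_coe, mem_finInv,
      mem_image_phiJNeg] at hq ⊢
    have hsb := (sameBlock_of_lt_of_apply_lt hy hq.1 hq.2).symm
    have hpos := (hv.mul_apply_lt_mul_apply_iff hy hsb).2 hq.2
    simp only [actRoot, Prod.fst_swap, Prod.snd_swap, Equiv.Perm.coe_inv,
      Equiv.symm_apply_apply]
    exact ⟨⟨hpos, hq.1⟩, hq.1, hsb⟩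

end InversionSets

theorem statement9_general {n : ℕ} (J : Set (Fin n)) (V : Finset (Fin (n + 1) × Fin (n + 1)))
    (v y w : Equiv.Perm (Fin (n + 1)))
    (hv : IsMinRep J v) (hy : y ∈ WJ J) (hw : w = v * y) :
    (finInv w⁻¹ \ V).card +
      ((finInv w⁻¹ ∩ V) ∩ (phiJNeg J).image (actRoot w)).card =
    (finInv v⁻¹ \ V).card + len y := by
  subst hw
  rw [Finset.card_sdiff_add_card_inter_inter_of_subset_union
      (finInv_inv_subset_finInv_mul_inv hv hy) (finInv_mul_inv_subset hy)
      (disjoint_finInv_inv_image_phiJNeg hv hy),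
    card_finInv_mul_inv_inter_image_phiJNeg hv hy]

/-- for any subset `𝒱 ⊆ Φ⁺` and `w = vy` with `v` minimal in `wW_J`,
`y ∈ W_J`: `|N(w⁻¹) ∩ 𝒱ᶜ| + |N(w⁻¹) ∩ 𝒱 ∩ w(Φ_J⁻)| = |N(v⁻¹) ∩ 𝒱ᶜ| + ℓ(y)`. -/
theorem statement9 {n : ℕ} (J : Set (Fin n)) (V : Finset (Fin (n + 1) × Fin (n + 1)))
    (hV : ∀ p ∈ V, IsPosRoot p) (v y w : Equiv.Perm (Fin (n + 1)))
    (hv : IsMinRep J v) (hy : y ∈ WJ J) (hw : w = v * y) :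
    (finInv w⁻¹ \ V).card +
      ((finInv w⁻¹ ∩ V) ∩ (phiJNeg J).image (actRoot w)).card =
    (finInv v⁻¹ \ V).card + len y :=
  statement9_general J V v y w hv hy hw
end

section
/- Let W = S_n with string decomposition w = w_{n−1} ⋯ w_1, and let J be a subset of the simple roots. Then w is the minimal-length representative of its coset wW_J if and only if ℓ(w_i) ≤ ℓ(w_{i−1}) for every index i with α_i ∈ J (with the convention ℓ(w_0) = 0). -/
/-- The simple reflection `s_j` (`0`-indexed) in `S_{n+1}`, or the identity if
`j` is out of range. -/
def sN {n : ℕ} (j : ℕ) : Equiv.Perm (Fin (n + 1)) :=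
  if h : j + 1 ≤ n then
    Equiv.swap ⟨j, by omega⟩ ⟨j + 1, by omega⟩
  else 1

/-- The string `w_i = s_{i+1-ℓ} s_{i+2-ℓ} ⋯ s_i` of length `ℓ` ending at the simple
reflection `s_i` (the identity when `ℓ = 0`). -/
def wstring {n : ℕ} (i ℓ : ℕ) : Equiv.Perm (Fin (n + 1)) :=
  ((List.range' (i + 1 - ℓ) ℓ).map (sN (n := n))).prod

/-- The product `w_{n-1} w_{n-2} ⋯ w_1 w_0` of the strings encoded by the length
function `f` (`f i = ℓ(w_i)`). -/
def strProd {n : ℕ} (f : Fin n → ℕ) : Equiv.Perm (Fin (n + 1)) :=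
  ((List.finRange n).reverse.map fun i => wstring (n := n) i.val (f i)).prod

/-!
`w` is the minimal representative of `wW_J` iff `w(i) < w(i+1)` for every `α_i ∈ J`: a descent
at such an `i` is shortened by `s_i`, while if `w` increases along every `W_J`-orbit (an interval
of positions), then for `y ∈ W_J` the map `(a, b) ↦ (y⁻¹ a, y⁻¹ b)` sends inversions of `w` to
inversions of `wy`, because `y` preserves the orbits and inversions of `w` join distinct orbits.

For `w = w_{n-1} ⋯ w_0`, the prefix `w_i ⋯ w_0` permutes `{0, …, i+1}`, sends `i+1` to
`i+1-ℓ(w_i)` and `i` to `w_i(i-ℓ(w_{i-1}))`, and the remaining strings are increasing on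
`{0, …, i+1}`; comparing the two values gives `w(i) < w(i+1) ↔ ℓ(w_i) ≤ ℓ(w_{i-1})`.
-/

open Equiv

lemma val_sgen_apply {n : ℕ} (i : Fin n) (x : Fin (n + 1)) :
    (sgen i x).val =
      if x.val = i.val then i.val + 1 else if x.val = i.val + 1 then i.val else x.val := by
  rw [sgen, Equiv.swap_apply_def]
  split_ifs <;> simp_all [Fin.ext_iff]

lemma sgen_lt_sgen {n : ℕ} (i : Fin n) {a b : Fin (n + 1)} (hab : a < b)
    (hne : (a, b) ≠ (i.castSucc, i.succ)) : sgen i a < sgen i b := by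
  have ha := val_sgen_apply i a
  have hb := val_sgen_apply i b
  simp only [ne_eq, Prod.mk.injEq, Fin.ext_iff, Fin.val_castSucc, Fin.val_succ] at hne
  rw [Fin.lt_def] at hab ⊢
  split_ifs at ha hb <;> omega

def inversions {n : ℕ} (w : Perm (Fin n)) : Finset (Fin n × Fin n) :=
  Finset.univ.filter fun p => p.1 < p.2 ∧ w p.2 < w p.1

lemma len_eq_card_inversions {n : ℕ} (w : Perm (Fin n)) : len w = (inversions w).card := rfl

lemma mem_inversions {n : ℕ} {w : Perm (Fin n)} {p : Fin n × Fin n} :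
    p ∈ inversions w ↔ p.1 < p.2 ∧ w p.2 < w p.1 := by
  simp [inversions]

lemma len_mul_sgen_lt_s12 {n : ℕ} (w : Perm (Fin (n + 1))) (i : Fin n)
    (h : w i.succ < w i.castSucc) : len (w * sgen i) < len w := by
  set s := sgen i
  have hmem : (i.castSucc, i.succ) ∈ inversions w := mem_inversions.2 ⟨Fin.castSucc_lt_succ, h⟩
  rw [len_eq_card_inversions, len_eq_card_inversions]
  refine lt_of_le_of_lt ?_ (Finset.card_erase_lt_of_mem hmem)
  refine Finset.card_le_card_of_injOn (Prod.map s s) ?_ (s.injective.prodMap s.injective).injOn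
  rintro ⟨a, b⟩ hp
  obtain ⟨hab, hinv⟩ := mem_inversions.1 hp
  have hne : (a, b) ≠ (i.castSucc, i.succ) := by
    rintro ⟨⟩
    simp only [s, sgen, Perm.mul_apply, swap_apply_left, swap_apply_right] at hinv
    exact lt_asymm h hinv
  refine Finset.mem_erase.2 ⟨fun heq => ?_, mem_inversions.2 ⟨sgen_lt_sgen i hab hne, hinv⟩⟩
  simp only [Prod.map_apply, Prod.mk.injEq, s, sgen, swap_apply_eq_iff, swap_apply_left,
    swap_apply_right] at heq
  rw [heq.1, heq.2] at hab
  exact lt_asymm hab Fin.castSucc_lt_succ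

/-- The fibres of `blockIndex J` are the `W_J`-orbits: the maximal intervals of positions
joined by simple roots in `J`. -/
noncomputable def blockIndex {n : ℕ} (J : Set (Fin n)) (x : Fin (n + 1)) : ℕ :=
  {k : Fin n | k ∉ J ∧ k.castSucc < x}.ncard

section blockIndex

variable {n : ℕ} (J : Set (Fin n))

lemma blockIndex_mono : Monotone (blockIndex J) := fun _ _ hxy =>
  Set.ncard_le_ncard fun _ hk => ⟨hk.1, hk.2.trans_le hxy⟩

lemma blockIndex_succ_of_mem {i : Fin n} (hi : i ∈ J) :
    blockIndex J i.succ = blockIndex J i.castSucc := by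
  unfold blockIndex
  congr 1
  ext k
  simp only [Set.mem_ofPred_eq, Fin.lt_def, Fin.val_castSucc, Fin.val_succ]
  constructor
  · rintro ⟨hk, hlt⟩
    refine ⟨hk, lt_of_le_of_ne (by omega) fun heq => hk ?_⟩
    exact (Fin.ext heq : k = i) ▸ hi
  · rintro ⟨hk, hlt⟩
    exact ⟨hk, by omega⟩

lemma blockIndex_castSucc_lt_succ_of_notMem {i : Fin n} (hi : i ∉ J) :
    blockIndex J i.castSucc < blockIndex J i.succ := by
  refine Set.ncard_lt_ncard (Set.ssubset_iff_of_subset ?_ |>.2 ⟨i, ?_, ?_⟩)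
  · exact fun k hk => ⟨hk.1, hk.2.trans Fin.castSucc_lt_succ⟩
  · exact ⟨hi, Fin.castSucc_lt_succ⟩
  · exact fun h => lt_irrefl _ h.2

lemma blockIndex_apply_of_mem_WJ {y : Perm (Fin (n + 1))} (hy : y ∈ WJ J) (x : Fin (n + 1)) :
    blockIndex J (y x) = blockIndex J x := by
  induction hy using Subgroup.closure_induction generalizing x with
  | mem g hg =>
    obtain ⟨i, hi, rfl⟩ := hg
    rw [sgen, swap_apply_def]
    split_ifs with h1 h2
    · rw [h1, blockIndex_succ_of_mem J hi]
    · rw [h2, blockIndex_succ_of_mem J hi]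
    · rfl
  | one => rfl
  | mul g h _ _ ihg ihh => rw [Perm.mul_apply, ihg, ihh]
  | inv g _ ihg => rw [← ihg (g⁻¹ x), Perm.inv_def, apply_symm_apply]

lemma lt_of_blockIndex_eq {w : Perm (Fin (n + 1))} (hasc : ∀ i ∈ J, w i.castSucc < w i.succ)
    {a b : Fin (n + 1)} (hab : a < b) (hblk : blockIndex J a = blockIndex J b) : w a < w b := by
  have hmono : StrictMono fun x => toLex (blockIndex J x, w x) := by
    refine Fin.strictMono_iff_lt_succ.2 fun i => Prod.Lex.toLex_lt_toLex.2 ?_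
    by_cases hi : i ∈ J
    · exact .inr ⟨blockIndex_succ_of_mem J hi |>.symm, hasc i hi⟩
    · exact .inl (blockIndex_castSucc_lt_succ_of_notMem J hi)
  simpa [Prod.Lex.toLex_lt_toLex, hblk] using hmono hab

lemma len_le_len_mul_of_mem_WJ {w y : Perm (Fin (n + 1))}
    (hasc : ∀ i ∈ J, w i.castSucc < w i.succ) (hy : y ∈ WJ J) : len w ≤ len (w * y) := by
  rw [len_eq_card_inversions, len_eq_card_inversions]
  refine Finset.card_le_card_of_injOn (Prod.map ⇑y⁻¹ ⇑y⁻¹) ?_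
    (y⁻¹.injective.prodMap y⁻¹.injective).injOn
  rintro ⟨a, b⟩ hp
  obtain ⟨hab, hinv⟩ := mem_inversions.1 hp
  have hblk : ∀ x, blockIndex J (y⁻¹ x) = blockIndex J x := fun x => by
    rw [← blockIndex_apply_of_mem_WJ J hy, Perm.inv_def, apply_symm_apply]
  -- `w` increases along each `W_J`-orbit, so the inversion `(a, b)` joins two orbits
  have hlt : blockIndex J a < blockIndex J b := (blockIndex_mono J hab.le).lt_of_ne
    fun h => lt_asymm hinv (lt_of_blockIndex_eq J hasc hab h)
  refine mem_inversions.2 ⟨(blockIndex_mono J).reflect_lt ?_, ?_⟩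
  · rwa [Prod.map_fst, Prod.map_snd, hblk, hblk]
  · simpa [Perm.mul_apply] using hinv

theorem isMinRep_iff_forall_mem_lt {w : Perm (Fin (n + 1))} :
    IsMinRep J w ↔ ∀ i ∈ J, w i.castSucc < w i.succ := by
  refine ⟨fun hmin i hi => ?_, fun hasc y hy => len_le_len_mul_of_mem_WJ J hasc hy⟩
  refine lt_of_le_of_ne (not_lt.1 fun h => ?_) (w.injective.ne Fin.castSucc_lt_succ.ne)
  exact (hmin (sgen i) (Subgroup.subset_closure ⟨i, hi, rfl⟩)).not_gt (len_mul_sgen_lt_s12 w i h)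

end blockIndex

lemma val_sN_apply {n j : ℕ} (hj : j + 1 ≤ n) (x : Fin (n + 1)) :
    (sN (n := n) j x).val = if x.val = j then j + 1 else if x.val = j + 1 then j else x.val := by
  rw [sN, dif_pos hj, swap_apply_def]
  split_ifs <;> simp_all [Fin.ext_iff]

lemma val_wstring_apply {n i ℓ : ℕ} (hi : i < n) (hℓ : ℓ ≤ i + 1) (x : Fin (n + 1)) :
    (wstring (n := n) i ℓ x).val =
      if x.val ≤ i ∧ i + 1 ≤ x.val + ℓ then x.val + 1
      else if x.val = i + 1 ∧ 0 < ℓ then i + 1 - ℓ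
      else x.val := by
  induction ℓ with
  | zero => simp [wstring]
  | succ ℓ ih =>
    have hcons : wstring (n := n) i (ℓ + 1) = sN (i - ℓ) * wstring i ℓ := by
      rw [wstring, wstring, show i + 1 - (ℓ + 1) = i - ℓ by omega, List.range'_succ,
        List.map_cons, List.prod_cons, show i - ℓ + 1 = i + 1 - ℓ by omega]
    rw [hcons, Perm.mul_apply, val_sN_apply (by omega), ih (by omega)]
    split_ifs <;> omega

lemma wstring_strictMonoOn {n i ℓ : ℕ} (hi : i < n) (hℓ : ℓ ≤ i + 1) :
    StrictMonoOn (wstring (n := n) i ℓ) {x | x.val ≤ i} := fun x hx y hy hxy => by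
  simp only [Set.mem_ofPred_eq] at hx hy
  rw [Fin.lt_def, val_wstring_apply hi hℓ, val_wstring_apply hi hℓ]
  rw [Fin.lt_def] at hxy
  split_ifs <;> omega

/-- The prefix `w_{k-1} ⋯ w_1 w_0` of a string decomposition with lengths `g`. -/
def stringPrefix {n : ℕ} (g : ℕ → ℕ) (k : ℕ) : Perm (Fin (n + 1)) :=
  ((List.range k).reverse.map fun j => wstring (n := n) j (g j)).prod

section stringPrefix

variable {n : ℕ} {g : ℕ → ℕ}

lemma stringPrefix_succ (k : ℕ) :
    stringPrefix (n := n) g (k + 1) = wstring k (g k) * stringPrefix g k := by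
  simp [stringPrefix, List.range_succ]

lemma strProd_eq_stringPrefix (f : Fin n → ℕ) :
    strProd f = stringPrefix (fun j => if h : j < n then f ⟨j, h⟩ else 0) n := by
  rw [strProd, stringPrefix, ← List.map_coe_finRange_eq_range, ← List.map_reverse, List.map_map]
  refine congrArg _ (List.map_congr_left fun i _ => ?_)
  simp

lemma stringPrefix_apply_of_lt (hg : ∀ j, g j ≤ j + 1) {k : ℕ} (hk : k ≤ n) {x : Fin (n + 1)}
    (hx : k < x.val) : stringPrefix g k x = x := by
  induction k with
  | zero => rfl
  | succ k ih =>
    rw [stringPrefix_succ, Perm.mul_apply, ih (by omega) (by omega), Fin.ext_iff,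
      val_wstring_apply (by omega) (hg k)]
    split_ifs <;> omega

lemma val_stringPrefix_apply_le (hg : ∀ j, g j ≤ j + 1) {k : ℕ} (hk : k ≤ n) {x : Fin (n + 1)}
    (hx : x.val ≤ k) : (stringPrefix g k x).val ≤ k := by
  by_contra! h
  have hfix := (stringPrefix g k).injective (stringPrefix_apply_of_lt hg hk h)
  rw [hfix] at h
  omega

lemma stringPrefix_lt_iff_of_le (hg : ∀ j, g j ≤ j + 1) {m k : ℕ} (hmk : m ≤ k) (hk : k ≤ n)
    {x y : Fin (n + 1)} (hx : x.val ≤ m) (hy : y.val ≤ m) :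
    stringPrefix g k x < stringPrefix g k y ↔ stringPrefix g m x < stringPrefix g m y := by
  induction k, hmk using Nat.le_induction with
  | base => rfl
  | succ k hmk ih =>
    rw [stringPrefix_succ, Perm.mul_apply, Perm.mul_apply, ← ih (by omega)]
    exact (wstring_strictMonoOn (by omega) (hg k)).lt_iff_lt
      (val_stringPrefix_apply_le hg (by omega) (by omega))
      (val_stringPrefix_apply_le hg (by omega) (by omega))

lemma val_stringPrefix_apply_of_val_eq (hg : ∀ j, g j ≤ j + 1) {k : ℕ} (hk : k ≤ n)
    {x : Fin (n + 1)} (hx : x.val = k) :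
    (stringPrefix g k x).val = k - if k = 0 then 0 else g (k - 1) := by
  cases k with
  | zero => simp [stringPrefix, hx]
  | succ k =>
    rw [stringPrefix_succ, Perm.mul_apply, stringPrefix_apply_of_lt hg (by omega) (by omega),
      val_wstring_apply (by omega) (hg k), if_neg k.add_one_ne_zero, Nat.add_sub_cancel]
    have := hg k
    split_ifs <;> omega

end stringPrefix

theorem strProd_castSucc_lt_succ_iff {n : ℕ} (f : Fin n → ℕ) (hf : ∀ i, f i ≤ i.val + 1)
    (i : Fin n) :
    strProd f i.castSucc < strProd f i.succ ↔
      f i ≤ (if _ : 0 < i.val then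
        f ⟨i.val - 1, Nat.lt_of_le_of_lt (Nat.sub_le _ _) i.isLt⟩ else 0) := by
  set g : ℕ → ℕ := fun j => if h : j < n then f ⟨j, h⟩ else 0
  have hg : ∀ j, g j ≤ j + 1 := fun j => by
    by_cases h : j < n
    · simpa [g, h] using hf ⟨j, h⟩
    · simp [g, h]
  have hgi : g i = f i := by simp [g]
  have hprev : (if _ : 0 < i.val then
      f ⟨i.val - 1, Nat.lt_of_le_of_lt (Nat.sub_le _ _) i.isLt⟩ else 0) =
      if i.val = 0 then 0 else g (i.val - 1) := by
    rcases Nat.eq_zero_or_pos i.val with h | h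
    · simp [h]
    · simp [g, h, h.ne', i.isLt.trans' (Nat.sub_lt h one_pos)]
  rw [strProd_eq_stringPrefix, stringPrefix_lt_iff_of_le hg i.isLt le_rfl
      Fin.castSucc_lt_succ.le le_rfl, Fin.lt_def,
    val_stringPrefix_apply_of_val_eq hg i.isLt (x := i.succ) rfl, stringPrefix_succ,
    Perm.mul_apply, val_wstring_apply i.isLt (hg i),
    val_stringPrefix_apply_of_val_eq hg i.isLt.le rfl, hprev, ← hgi]
  have hprev_le : (if i.val = 0 then 0 else g (i.val - 1)) ≤ i.val := by
    have := hg (i.val - 1)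
    split_ifs <;> omega
  simp only [Nat.succ_ne_zero, if_false, Nat.succ_sub_one]
  generalize (if i.val = 0 then 0 else g (i.val - 1)) = p at hprev_le ⊢
  have := hg i
  split_ifs <;> omega

/-- with `w = w_{n-1} ⋯ w_0` the string decomposition of `w` (where
`f i = ℓ(w_i)`) and `J` a set of simple roots, `w` is the minimal-length
representative of `wW_J` iff `ℓ(w_i) ≤ ℓ(w_{i-1})` for every `i` with `α_i ∈ J`
(with the convention `ℓ(w_{-1}) = 0`). -/
theorem statement12 {n : ℕ} (J : Set (Fin n)) (w : Equiv.Perm (Fin (n + 1)))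
    (f : Fin n → ℕ) (hf : ∀ i, f i ≤ i.val + 1) (hw : w = strProd f) :
    IsMinRep J w ↔
      ∀ i : Fin n, i ∈ J →
        f i ≤ (if h : 0 < i.val then
          f ⟨i.val - 1, Nat.lt_of_le_of_lt (Nat.sub_le _ _) i.isLt⟩ else 0) := by
  subst hw
  rw [isMinRep_iff_forall_mem_lt]
  exact forall₂_congr fun i _ => strProd_castSucc_lt_succ_iff f hf i
end
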